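/- Let n be an even integer with n ≥ 2, let N ≥ 1, and set m = N + 3n − 3. Let τ ∈ S_m be a permutation whose support (the set of points it does not fix) has cardinality at most N. Then for every σ ∈ S_m having the same cycle type as τ, there exists g ∈ C(n, m) such that g τ g⁻¹ = σ. -/

import Mathlib

/-- The underlying function of the `n`-crossing permutation `π_j` over `{1, …, m}` (as a
function on `ℕ`): it sends `j + k` to `j + n - 1 - k` for `0 ≤ k ≤ n - 1` and fixes all
other points. -/
def crossFun (n j i : ℕ) : ℕ :=
  if j ≤ i ∧ i < j + n then 2 * j + n - 1 - i else i

lemma crossFun_involutive (n j : ℕ) : Function.Involutive (crossFun n j) := by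
  intro i
  unfold crossFun
  split_ifs <;> omega

/-- The `n`-crossing permutation `π_j`, viewed as a permutation of `ℕ` fixing every point
outside `{j, …, j + n - 1}`. -/
def crossPerm (n j : ℕ) : Equiv.Perm ℕ :=
  Function.Involutive.toPerm _ (crossFun_involutive n j)

/-- `C n m` is the subgroup of the symmetric group `S_m` (realized as permutations of `ℕ`
supported on `{1, …, m}`) generated by the `n`-crossing permutations `π_1, …, π_{m-n+1}`. -/
def C (n m : ℕ) : Subgroup (Equiv.Perm ℕ) :=
  Subgroup.closure {σ | ∃ j, 1 ≤ j ∧ j ≤ m - n + 1 ∧ σ = crossPerm n j}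

/-!
For even `n` and `m ≥ 3n - 2`, the group `C n m` contains every even permutation of
`{1, …, m}`. The word `π_{j+2} π_{j+1} π_j π_{j+1}` is the 3-cycle `(j, j+n+1, j+2)`, and
`π_{j+1} π_j` rotates the window `{j, …, j+n}` by two places; since `n + 1` is odd, its powers
realise every rotation of the window, and conjugating by them turns that 3-cycle into
`(j, j+1, j+3)` or `(b, b+3, b+2)`. Products of these give every consecutive 3-cycle
`(a, a+1, a+2)`, and consecutive 3-cycles generate the alternating group.

Given `σ = h τ h⁻¹`, the small support of `τ` leaves two fixed points `x ≠ y` in `{1, …, m}`;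
if `h` is odd then `h * swap x y` is even and still conjugates `τ` to `σ`.
-/

open Equiv Equiv.Perm

lemma exists_fixed_pair_of_ncard_add_two_le {α : Type*} {s : Finset α} {f : α → α}
    (hs : ∀ x, f x ≠ x → x ∈ s) (hcard : {x | f x ≠ x}.ncard + 2 ≤ s.card) :
    ∃ x ∈ s, ∃ y ∈ s, x ≠ y ∧ f x = x ∧ f y = y := by
  classical
  have hmoved : {x | f x ≠ x} = ↑(s.filter fun x => ¬f x = x) := by
    ext x
    simpa using fun hx => hs x hx
  have hsplit := s.card_filter_add_card_filter_not fun x => f x = x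
  rw [hmoved, Set.ncard_coe_finset] at hcard
  obtain ⟨x, hx, y, hy, hxy⟩ :=
    Finset.one_lt_card.1 (show 1 < (s.filter fun x => f x = x).card by omega)
  rw [Finset.mem_filter] at hx hy
  exact ⟨x, hx.1, y, hy.1, hxy, hx.2, hy.2⟩

namespace Equiv.Perm

section ThreeCycle

variable {α : Type*} [DecidableEq α]

def threeCycle (a b c : α) : Perm α := swap a b * swap b c

lemma threeCycle_conj (g : Perm α) (a b c : α) :
    g * threeCycle a b c * g⁻¹ = threeCycle (g a) (g b) (g c) := by
  simp only [threeCycle, swap_apply_apply]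
  group

lemma threeCycle_inv (a b c : α) : (threeCycle a b c)⁻¹ = threeCycle c b a := by
  simp only [threeCycle, mul_inv_rev, swap_inv, swap_comm]

lemma threeCycle_rotate {a b c : α} (hab : a ≠ b) (hbc : b ≠ c) (hac : a ≠ c) :
    threeCycle a b c = threeCycle b c a := by
  ext x
  simp only [threeCycle, mul_apply, swap_apply_def]
  split_ifs <;> simp_all

variable {a b c x : α}

lemma threeCycle_apply_left (hab : a ≠ b) (hac : a ≠ c) : threeCycle a b c a = b := by
  rw [threeCycle, mul_apply, swap_apply_of_ne_of_ne hab hac, swap_apply_left]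

lemma threeCycle_apply_mid (hbc : b ≠ c) (hac : a ≠ c) : threeCycle a b c b = c := by
  rw [threeCycle, mul_apply, swap_apply_left, swap_apply_of_ne_of_ne hac.symm hbc.symm]

lemma threeCycle_apply_right (b : α) : threeCycle a b c c = a := by
  rw [threeCycle, mul_apply, swap_apply_right, swap_apply_right]

lemma threeCycle_apply_of_ne (ha : x ≠ a) (hb : x ≠ b) (hc : x ≠ c) :
    threeCycle a b c x = x := by
  rw [threeCycle, mul_apply, swap_apply_of_ne_of_ne hb hc, swap_apply_of_ne_of_ne ha hb]

lemma threeCycle_apply (hab : a ≠ b) (hbc : b ≠ c) (hac : a ≠ c) :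
    threeCycle a b c x = if x = a then b else if x = b then c else if x = c then a else x := by
  split_ifs with hxa hxb hxc
  · subst hxa; exact threeCycle_apply_left hab hac
  · subst hxb; exact threeCycle_apply_mid hbc hac
  · subst hxc; exact threeCycle_apply_right b
  · exact threeCycle_apply_of_ne hxa hxb hxc

variable {H : Subgroup (Perm α)}

lemma threeCycle_mem_of_conj {g : Perm α} (hg : g ∈ H) (h : threeCycle a b c ∈ H)
    {a' b' c' : α} (ha : g a = a') (hb : g b = b') (hc : g c = c') :
    threeCycle a' b' c' ∈ H := by
  subst ha hb hc
  exact threeCycle_conj g a b c ▸ H.mul_mem (H.mul_mem hg h) (H.inv_mem hg)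

lemma threeCycle_mem_reverse (h : threeCycle a b c ∈ H) : threeCycle c b a ∈ H :=
  threeCycle_inv a b c ▸ H.inv_mem h

lemma threeCycle_mem_rotate (h : threeCycle a b c ∈ H) (hab : a ≠ b) (hbc : b ≠ c)
    (hac : a ≠ c) : threeCycle b c a ∈ H :=
  threeCycle_rotate hab hbc hac ▸ h

end ThreeCycle

section Alternating

variable {α : Type*} [DecidableEq α] {s : Finset α} {H : Subgroup (Perm α)}

lemma exists_ofSubtype_eq {h : Perm α} (hs : ∀ x, h x ≠ x → x ∈ s) :
    ∃ h' : Perm s, ofSubtype h' = h := by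
  have hiff : ∀ x, h x ∈ s ↔ x ∈ s := fun x => by
    by_cases hx : h x = x
    · rw [hx]
    · exact iff_of_true (hs _ fun e => hx (h.injective e)) (hs x hx)
  exact ⟨h.subtypePerm hiff, ofSubtype_subtypePerm hiff hs⟩

lemma alternatingGroup_map_ofSubtype_le
    (h3 : ∀ a ∈ s, ∀ b ∈ s, ∀ c ∈ s, a ≠ b → b ≠ c → a ≠ c → threeCycle a b c ∈ H) :
    (alternatingGroup s).map ofSubtype ≤ H := by
  rw [← closure_three_cycles_eq_alternating, MonoidHom.map_closure, Subgroup.closure_le]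
  rintro _ ⟨t, ht, rfl⟩
  obtain ⟨a, ha⟩ := Finset.card_pos.1 (ht.card_support.symm ▸ three_pos)
  have hnodup := ht.nodup_iff_mem_support.2 ha
  simp only [List.nodup_cons, List.mem_cons, List.not_mem_nil, List.nodup_nil, or_false,
    not_or, and_true, not_false_eq_true] at hnodup
  obtain ⟨⟨h01, h02⟩, h12⟩ := hnodup
  rw [ht.eq_swap_mul_swap_iff_mem_support.2 ha, map_mul, ofSubtype_swap_eq, ofSubtype_swap_eq]
  exact h3 _ a.2 _ (t a).2 _ (t (t a)).2 (Subtype.val_injective.ne h01)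
    (Subtype.val_injective.ne h12) (Subtype.val_injective.ne h02)

lemma exists_mem_conj_eq_conj (hA : (alternatingGroup s).map ofSubtype ≤ H) {τ h : Perm α}
    (hh : ∀ x, h x ≠ x → x ∈ s) {x y : α} (hx : x ∈ s) (hy : y ∈ s) (hxy : x ≠ y)
    (hτx : τ x = x) (hτy : τ y = y) : ∃ g ∈ H, g * τ * g⁻¹ = h * τ * h⁻¹ := by
  obtain ⟨h', rfl⟩ := exists_ofSubtype_eq hh
  rcases Int.units_eq_one_or (sign h') with hs | hs
  · exact ⟨ofSubtype h', hA (Subgroup.mem_map_of_mem _ (mem_alternatingGroup.2 hs)), rfl⟩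
  set t := swap (⟨x, hx⟩ : s) ⟨y, hy⟩
  have heven : h' * t ∈ alternatingGroup s := by
    rw [mem_alternatingGroup, map_mul, hs, sign_swap (by simpa using hxy), Int.units_mul_self]
  have hcomm : Commute τ (swap x y) := by
    rw [Commute, SemiconjBy, ← mul_inv_eq_iff_eq_mul, ← swap_apply_apply, hτx, hτy]
  refine ⟨ofSubtype (h' * t), hA (Subgroup.mem_map_of_mem _ heven), ?_⟩
  calc ofSubtype (h' * t) * τ * (ofSubtype (h' * t))⁻¹
      = ofSubtype h' * (swap x y * τ * (swap x y)⁻¹) * (ofSubtype h')⁻¹ := by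
        rw [map_mul, ofSubtype_swap_eq]; group
    _ = ofSubtype h' * τ * (ofSubtype h')⁻¹ := by rw [hcomm.symm.mul_inv_cancel]

end Alternating

section Consecutive

lemma threeCycle_consecutive_eq_mul (a : ℕ) :
    threeCycle a (a + 1) (a + 2) = threeCycle a (a + 3) (a + 2) * threeCycle a (a + 1) (a + 3) := by
  ext x
  rw [mul_apply, threeCycle_apply (by omega) (by omega) (by omega),
    threeCycle_apply (by omega) (by omega) (by omega),
    threeCycle_apply (by omega) (by omega) (by omega)]
  split_ifs <;> omega

variable {H : Subgroup (Perm ℕ)} {m : ℕ}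

lemma threeCycle_mem_of_lt
    (hK : ∀ a, 1 ≤ a → a + 2 ≤ m → threeCycle a (a + 1) (a + 2) ∈ H) :
    ∀ c a b, 1 ≤ a → a < b → b < c → c ≤ m → threeCycle a b c ∈ H
  | 0, _, _, _, _, hbc, _ => absurd hbc (Nat.not_lt_zero _)
  | c + 1, a, b, ha, hab, hbc, hcm => by
    have ih := threeCycle_mem_of_lt hK c
    have hg : threeCycle (c - 1) c (c + 1) ∈ H := by
      have := hK (c - 1) (by omega) (by omega)
      rwa [show c - 1 + 1 = c by omega, show c - 1 + 2 = c + 1 by omega] at this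
    rcases (by omega : b + 1 < c ∨ b = c - 1 ∨ (a + 1 < c ∧ c = b) ∨ (a = c - 1 ∧ c = b))
      with hb | rfl | ⟨ha', rfl⟩ | ⟨rfl, rfl⟩
    · exact threeCycle_mem_of_conj hg (ih a b ha hab (by omega) (by omega))
        (threeCycle_apply_of_ne (by omega) (by omega) (by omega))
        (threeCycle_apply_of_ne (by omega) (by omega) (by omega))
        (threeCycle_apply_mid (by omega) (by omega))
    · have h := threeCycle_mem_reverse (threeCycle_mem_rotate
        (ih a (c - 1) ha (by omega) (by omega) (by omega)) (by omega) (by omega) (by omega))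
      exact threeCycle_mem_of_conj (threeCycle_mem_reverse hg) h
        (threeCycle_apply_of_ne (by omega) (by omega) (by omega))
        (threeCycle_apply_mid (by omega) (by omega)) (threeCycle_apply_right _)
    · exact threeCycle_mem_of_conj hg (ih a (c - 1) ha (by omega) (by omega) (by omega))
        (threeCycle_apply_of_ne (by omega) (by omega) (by omega))
        (threeCycle_apply_left (by omega) (by omega))
        (threeCycle_apply_mid (by omega) (by omega))
    · exact hg

lemma threeCycle_mem_of_consecutive
    (hK : ∀ a, 1 ≤ a → a + 2 ≤ m → threeCycle a (a + 1) (a + 2) ∈ H) :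
    ∀ a ∈ Finset.Icc 1 m, ∀ b ∈ Finset.Icc 1 m, ∀ c ∈ Finset.Icc 1 m,
      a ≠ b → b ≠ c → a ≠ c → threeCycle a b c ∈ H := by
  intro a ha b hb c hc hab hbc hac
  simp only [Finset.mem_Icc] at ha hb hc
  have sorted {x y z : ℕ} (hxy : x < y) (hyz : y < z) (hx : 1 ≤ x) (hz : z ≤ m) :
      threeCycle x y z ∈ H :=
    threeCycle_mem_of_lt hK z x y hx hxy hyz hz
  rcases (by omega : a < b ∧ b < c ∨ b < c ∧ c < a ∨ c < a ∧ a < b ∨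
      c < b ∧ b < a ∨ b < a ∧ a < c ∨ a < c ∧ c < b) with h | h | h | h | h | h
  all_goals have hs := sorted h.1 h.2 (by omega) (by omega)
  · exact hs
  · exact threeCycle_mem_rotate (threeCycle_mem_rotate hs hbc hac.symm hab.symm)
      hac.symm hab hbc.symm
  · exact threeCycle_mem_rotate hs hac.symm hab hbc.symm
  · exact threeCycle_mem_reverse hs
  · exact threeCycle_mem_rotate (threeCycle_mem_reverse hs) hac.symm hab hbc.symm
  · exact threeCycle_mem_rotate (threeCycle_mem_rotate (threeCycle_mem_reverse hs)
      hbc hac.symm hab.symm) hac.symm hab hbc.symm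

end Consecutive

end Equiv.Perm

section Crossing

variable {n m : ℕ}

lemma crossPerm_apply (n j x : ℕ) :
    crossPerm n j x = if j ≤ x ∧ x < j + n then 2 * j + n - 1 - x else x := rfl

lemma crossPerm_mem_C {j : ℕ} (hj : 1 ≤ j) (hjm : j + n ≤ m + 1) : crossPerm n j ∈ C n m :=
  Subgroup.subset_closure ⟨j, hj, by omega, rfl⟩

def crossShift (n j : ℕ) : Perm ℕ := crossPerm n (j + 1) * crossPerm n j

lemma crossShift_mem_C {j : ℕ} (hj : 1 ≤ j) (hjm : j + n ≤ m) : crossShift n j ∈ C n m :=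
  mul_mem (crossPerm_mem_C (by omega) (by omega)) (crossPerm_mem_C hj (by omega))

lemma crossShift_apply_add (hn : 2 ≤ n) (j : ℕ) {r : ℕ} (hr : r ≤ n) :
    crossShift n j (j + r) = j + (r + 2) % (n + 1) := by
  have hmod : (r + 2) % (n + 1) = if r + 2 ≤ n then r + 2 else r + 1 - n := by
    split_ifs
    · exact Nat.mod_eq_of_lt (by omega)
    · rw [Nat.mod_eq_sub_mod (by omega), Nat.mod_eq_of_lt (by omega)]
      omega
  rw [hmod]
  simp only [crossShift, mul_apply, crossPerm_apply]
  split_ifs <;> omega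

lemma crossShift_pow_apply_add (hn : 2 ≤ n) (j k : ℕ) {r : ℕ} (hr : r ≤ n) :
    (crossShift n j ^ k) (j + r) = j + (r + 2 * k) % (n + 1) := by
  induction k generalizing r with
  | zero => rw [pow_zero, one_apply, mul_zero, add_zero, Nat.mod_eq_of_lt (by omega)]
  | succ k ih =>
    rw [pow_succ, mul_apply, crossShift_apply_add hn j hr,
      ih (Nat.le_of_lt_succ (Nat.mod_lt _ (by omega))), Nat.mod_add_mod]
    congr 2
    ring

lemma crossShift_pow_apply_of_not_mem (j k : ℕ) {x : ℕ} (hx : x < j ∨ j + n < x) :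
    (crossShift n j ^ k) x = x := by
  have hfix : crossShift n j x = x := by
    simp only [crossShift, mul_apply, crossPerm_apply]
    split_ifs <;> omega
  induction k with
  | zero => rfl
  | succ k ih => rw [pow_succ, mul_apply, hfix, ih]

lemma crossPerm_word_eq_threeCycle (hn : 2 ≤ n) (j : ℕ) :
    crossPerm n (j + 2) * crossPerm n (j + 1) * crossPerm n j * crossPerm n (j + 1) =
      threeCycle j (j + n + 1) (j + 2) := by
  ext x
  simp only [threeCycle, mul_apply, crossPerm_apply, swap_apply_def]
  split_ifs <;> omega

lemma threeCycle_add_succ_add_two_mem_C (hn : 2 ≤ n) {j : ℕ} (hj : 1 ≤ j)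
    (hjm : j + n + 1 ≤ m) : threeCycle j (j + n + 1) (j + 2) ∈ C n m := by
  rw [← crossPerm_word_eq_threeCycle hn]
  exact mul_mem (mul_mem (mul_mem (crossPerm_mem_C (by omega) (by omega))
    (crossPerm_mem_C (by omega) (by omega))) (crossPerm_mem_C hj (by omega)))
    (crossPerm_mem_C (by omega) (by omega))

lemma threeCycle_add_one_add_three_mem_C_of_le (hn : Even n) (hn2 : 2 ≤ n) {j : ℕ}
    (hj : 1 ≤ j) (hjm : j + n + 1 ≤ m) : threeCycle j (j + 1) (j + 3) ∈ C n m := by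
  obtain ⟨t, rfl⟩ := hn
  refine threeCycle_mem_of_conj (pow_mem (crossShift_mem_C (j := j + 1) (by omega) (by omega))
    (t + 1)) (threeCycle_add_succ_add_two_mem_C hn2 hj hjm) ?_ ?_ ?_
  · exact crossShift_pow_apply_of_not_mem _ _ (.inl (by omega))
  · rw [show j + (t + t) + 1 = j + 1 + (t + t) by omega, crossShift_pow_apply_add hn2 _ _ le_rfl,
      show t + t + 2 * (t + 1) = 2 * (t + t + 1) by ring, Nat.mul_mod_left]
  · rw [show j + 2 = j + 1 + 1 by omega, crossShift_pow_apply_add hn2 _ _ (by omega),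
      show 1 + 2 * (t + 1) = 2 + (t + t + 1) by ring, Nat.add_mod_right,
      Nat.mod_eq_of_lt (by omega)]

lemma threeCycle_add_three_add_two_mem_C_of_le (hn : Even n) (hn2 : 2 ≤ n) {b : ℕ}
    (hb : n ≤ b + 1) (hbm : b + 3 ≤ m) : threeCycle b (b + 3) (b + 2) ∈ C n m := by
  obtain ⟨t, rfl⟩ := hn
  obtain ⟨j, rfl⟩ : ∃ j, b = j + (t + t) - 2 := ⟨b + 2 - (t + t), by omega⟩
  refine threeCycle_mem_of_conj (pow_mem (crossShift_mem_C (j := j) (by omega) (by omega))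
    (t - 1)) (threeCycle_add_succ_add_two_mem_C (j := j) hn2 (by omega) (by omega)) ?_ ?_ ?_
  · have h := crossShift_pow_apply_add hn2 j (t - 1) (Nat.zero_le _)
    rw [add_zero, zero_add, Nat.mod_eq_of_lt (by omega)] at h
    omega
  · rw [crossShift_pow_apply_of_not_mem _ _ (.inr (by omega))]
    omega
  · rw [crossShift_pow_apply_add hn2 _ _ (by omega), Nat.mod_eq_of_lt (by omega)]
    omega

lemma threeCycle_add_one_add_three_mem_C (hn : Even n) (hn2 : 2 ≤ n) (hm : 3 * n ≤ m + 2)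
    {a : ℕ} (ha : 1 ≤ a) (ham : a + 3 ≤ m) : threeCycle a (a + 1) (a + 3) ∈ C n m := by
  by_cases hsmall : a + n + 1 ≤ m
  · exact threeCycle_add_one_add_three_mem_C_of_le hn hn2 ha hsmall
  obtain ⟨b, rfl⟩ : ∃ b, a = b + 1 := ⟨a - 1, by omega⟩
  have hG : threeCycle b (b + 3) (b + 2) ∈ C n m :=
    threeCycle_add_three_add_two_mem_C_of_le hn hn2 (by omega) (by omega)
  have hG' : threeCycle (b + 1) (b + 4) (b + 3) ∈ C n m :=
    threeCycle_add_three_add_two_mem_C_of_le hn hn2 (by omega) ham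
  have h : threeCycle (b + 2) (b + 4) (b + 1) ∈ C n m :=
    threeCycle_mem_of_conj hG (threeCycle_mem_reverse hG')
      (threeCycle_apply_mid (by omega) (by omega))
      (threeCycle_apply_of_ne (by omega) (by omega) (by omega))
      (threeCycle_apply_of_ne (by omega) (by omega) (by omega))
  exact threeCycle_mem_rotate (threeCycle_mem_rotate h (by omega) (by omega) (by omega))
    (by omega) (by omega) (by omega)

lemma threeCycle_add_three_add_two_mem_C (hn : Even n) (hn2 : 2 ≤ n) (hm : 3 * n ≤ m + 2)
    {a : ℕ} (ha : 1 ≤ a) (ham : a + 3 ≤ m) : threeCycle a (a + 3) (a + 2) ∈ C n m := by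
  by_cases hlarge : n ≤ a + 1
  · exact threeCycle_add_three_add_two_mem_C_of_le hn hn2 hlarge ham
  have hF : threeCycle a (a + 1) (a + 3) ∈ C n m :=
    threeCycle_add_one_add_three_mem_C_of_le hn hn2 ha (by omega)
  have hF' : threeCycle (a + 1) (a + 2) (a + 4) ∈ C n m :=
    threeCycle_add_one_add_three_mem_C_of_le hn hn2 (by omega) (by omega)
  have h : threeCycle (a + 3) (a + 2) a ∈ C n m :=
    threeCycle_mem_of_conj hF' (threeCycle_mem_reverse hF)
      (threeCycle_apply_of_ne (by omega) (by omega) (by omega))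
      (threeCycle_apply_left (by omega) (by omega))
      (threeCycle_apply_of_ne (by omega) (by omega) (by omega))
  exact threeCycle_mem_rotate (threeCycle_mem_rotate h (by omega) (by omega) (by omega))
    (by omega) (by omega) (by omega)

lemma threeCycle_consecutive_mem_C (hn : Even n) (hn2 : 2 ≤ n) (hm : 3 * n ≤ m + 2)
    {a : ℕ} (ha : 1 ≤ a) (ham : a + 2 ≤ m) : threeCycle a (a + 1) (a + 2) ∈ C n m := by
  have hlow {a : ℕ} (ha : 1 ≤ a) (ham : a + 3 ≤ m) :
      threeCycle a (a + 1) (a + 2) ∈ C n m :=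
    threeCycle_consecutive_eq_mul a ▸ mul_mem (threeCycle_add_three_add_two_mem_C hn hn2 hm ha ham)
      (threeCycle_add_one_add_three_mem_C hn hn2 hm ha ham)
  by_cases hlast : a + 3 ≤ m
  · exact hlow ha hlast
  -- `a + 3` is out of range, so conjugate the preceding consecutive 3-cycle instead
  obtain ⟨b, rfl⟩ : ∃ b, a = b + 1 := ⟨a - 1, by omega⟩
  have h : threeCycle (b + 1) (b + 3) (b + 2) ∈ C n m :=
    threeCycle_mem_of_conj (threeCycle_add_one_add_three_mem_C hn hn2 hm (by omega) (by omega))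
      (hlow (by omega) (by omega)) (threeCycle_apply_left (by omega) (by omega))
      (threeCycle_apply_mid (by omega) (by omega))
      (threeCycle_apply_of_ne (by omega) (by omega) (by omega))
  rw [threeCycle_rotate (by omega) (by omega) (by omega)]
  exact threeCycle_mem_reverse h

lemma alternatingGroup_map_ofSubtype_le_C (hn : Even n) (hn2 : 2 ≤ n) (hm : 3 * n ≤ m + 2) :
    (alternatingGroup (Finset.Icc 1 m)).map ofSubtype ≤ C n m :=
  alternatingGroup_map_ofSubtype_le <| threeCycle_mem_of_consecutive fun _ ha ham =>
    threeCycle_consecutive_mem_C hn hn2 hm ha ham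

end Crossing

theorem stmt3_general (n : ℕ) (hn : Even n) (hn2 : 2 ≤ n) (N : ℕ) (hN : 1 ≤ N)
    (τ σ : Equiv.Perm ℕ)
    (hτsupp : ∀ i, τ i ≠ i → 1 ≤ i ∧ i ≤ N + 3 * n - 3)
    (hτsize : {i | τ i ≠ i}.ncard ≤ N)
    (hcycleType : ∃ h : Equiv.Perm ℕ,
      (∀ i, h i ≠ i → 1 ≤ i ∧ i ≤ N + 3 * n - 3) ∧ h * τ * h⁻¹ = σ) :
    ∃ g ∈ C n (N + 3 * n - 3), g * τ * g⁻¹ = σ := by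
  obtain ⟨h, hh, rfl⟩ := hcycleType
  have hcard : {i | τ i ≠ i}.ncard + 2 ≤ (Finset.Icc 1 (N + 3 * n - 3)).card := by
    rw [Nat.card_Icc]
    omega
  obtain ⟨x, hx, y, hy, hxy, hτx, hτy⟩ :=
    exists_fixed_pair_of_ncard_add_two_le (fun i hi => Finset.mem_Icc.2 (hτsupp i hi)) hcard
  exact exists_mem_conj_eq_conj (alternatingGroup_map_ofSubtype_le_C hn hn2 (by omega))
    (fun i hi => Finset.mem_Icc.2 (hh i hi)) hx hy hxy hτx hτy

theorem stmt3 (n : ℕ) (hn : Even n) (hn2 : 2 ≤ n) (N : ℕ) (hN : 1 ≤ N)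
    (τ σ : Equiv.Perm ℕ)
    (hτsupp : ∀ i, τ i ≠ i → 1 ≤ i ∧ i ≤ N + 3 * n - 3)
    (hτsize : {i | τ i ≠ i}.ncard ≤ N)
    (hσsupp : ∀ i, σ i ≠ i → 1 ≤ i ∧ i ≤ N + 3 * n - 3)
    (hcycleType : ∃ h : Equiv.Perm ℕ,
      (∀ i, h i ≠ i → 1 ≤ i ∧ i ≤ N + 3 * n - 3) ∧ h * τ * h⁻¹ = σ) :
    ∃ g ∈ C n (N + 3 * n - 3), g * τ * g⁻¹ = σ :=
  stmt3_general n hn hn2 N hN τ σ hτsupp hτsize hcycleType
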